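/- arXiv:1312.4015 — 3 statements merged into one kernel-verified Lean document; each statement's English description precedes it below -/
import Mathlib

section
/- Let K be a commutative ring, G a group, and ε : G →* Kˣ a group homomorphism (a sign character), whose values are regarded as elements of K. Let U and V be finite subgroups of G. Then in the group algebra K[G] (MonoidAlgebra K G) the identity (∑_{u ∈ U} ε(u)·u) * (∑_{v ∈ V} ε(v)·v) = |U ∩ V| · (∑_{y ∈ UV} ε(y)·y) holds, where UV = {uv : u ∈ U, v ∈ V} is the (finite) product set, the sum over UV is over its distinct elements, and |U ∩ V| denotes the order of U ∩ V acting as a natural-number scalar. -/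
/-!
Expanding the product gives `∑_{(u, v) ∈ U × V} ε(uv)·uv`, because `g ↦ ε(g)·g` is multiplicative.
Every fibre of the multiplication map `U × V → UV` is a copy of `U ∩ V`: if
`u v = u₀ v₀` then `u₀⁻¹ u = v₀ v⁻¹ ∈ U ∩ V`, and conversely `w ↦ (u₀ w, w⁻¹ v₀)`.
So each `y ∈ UV` is hit exactly `|U ∩ V|` times.
-/

open Finset

namespace Subgroup

variable {G : Type*} [Group G] (U V : Subgroup G)

def mulFiberEquivInf {u₀ v₀ : G} (hu₀ : u₀ ∈ U) (hv₀ : v₀ ∈ V) :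
    {p : U × V // (p.1 : G) * p.2 = u₀ * v₀} ≃ ↥(U ⊓ V) where
  toFun p := ⟨u₀⁻¹ * p.1.1.1, U.mul_mem (U.inv_mem hu₀) p.1.1.2, by
    have h : u₀⁻¹ * p.1.1 = v₀ * (p.1.2 : G)⁻¹ := by
      rw [inv_mul_eq_iff_eq_mul, ← mul_assoc]
      exact eq_mul_inv_of_mul_eq p.2
    exact h ▸ V.mul_mem hv₀ (V.inv_mem p.1.2.2)⟩
  invFun w :=
    ⟨(⟨u₀ * w, U.mul_mem hu₀ w.2.1⟩, ⟨(w : G)⁻¹ * v₀, V.mul_mem (V.inv_mem w.2.2) hv₀⟩),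
      by simp [mul_assoc]⟩
  left_inv p := by
    have hp := p.2
    ext <;> simp [mul_assoc, ← hp]
  right_inv w := by ext; simp

theorem card_filter_mul_eq_card_inf [Fintype U] [Fintype V] [DecidableEq G] {u₀ v₀ : G}
    (hu₀ : u₀ ∈ U) (hv₀ : v₀ ∈ V) :
    #{p : U × V | (p.1 : G) * p.2 = u₀ * v₀} = Nat.card ↥(U ⊓ V) := by
  rw [← Fintype.card_subtype, ← Nat.card_eq_fintype_card,
    Nat.card_congr (U.mulFiberEquivInf V hu₀ hv₀)]

theorem sum_mul_eq_card_inf_smul_sum_image {M : Type*} [AddCommMonoid M] [Fintype U] [Fintype V]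
    [DecidableEq G] (f : G → M) :
    ∑ p : U × V, f (p.1 * p.2) =
      Nat.card ↥(U ⊓ V) • ∑ y ∈ univ.image (fun p : U × V => (p.1 : G) * p.2), f y := by
  rw [Finset.sum_comp f (fun p : U × V => (p.1 : G) * p.2), Finset.smul_sum]
  refine Finset.sum_congr rfl fun y hy => ?_
  obtain ⟨⟨u₀, v₀⟩, -, rfl⟩ := Finset.mem_image.mp hy
  rw [card_filter_mul_eq_card_inf U V u₀.2 v₀.2]

end Subgroup

theorem MonoidAlgebra.single_units_mul_single_units {K G : Type*} [Semiring K] [Monoid G]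
    (ε : G →* Kˣ) (g h : G) :
    single g (ε g : K) * single h (ε h : K) = single (g * h) (ε (g * h) : K) := by
  rw [single_mul_single, map_mul, Units.val_mul]

/-- Peel's lemma (result 2.3 of the paper): for finite subgroups `U`, `V` of `G` and a sign
character `ε : G →* Kˣ`, one has
`(∑_{u ∈ U} ε(u)·u) * (∑_{v ∈ V} ε(v)·v) = |U ∩ V| · (∑_{y ∈ UV} ε(y)·y)`
in the group algebra `K[G]`, where the last sum runs over the distinct elements of the
product set `UV`. -/
theorem garnir_peel_lemma (K : Type*) [CommRing K] (G : Type*) [Group G] [DecidableEq G]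
    (ε : G →* Kˣ) (U V : Subgroup G) [Fintype U] [Fintype V] :
    (∑ u : U, MonoidAlgebra.single (u : G) ((ε (u : G) : Kˣ) : K)) *
        (∑ v : V, MonoidAlgebra.single (v : G) ((ε (v : G) : Kˣ) : K)) =
      Nat.card ↥(U ⊓ V) •
        ∑ y ∈ Finset.image (fun p : U × V => (p.1 : G) * (p.2 : G)) Finset.univ,
          MonoidAlgebra.single y ((ε y : Kˣ) : K) := by
  simp_rw [Finset.sum_mul_sum, MonoidAlgebra.single_units_mul_single_units]
  rw [← Finset.sum_product', Finset.univ_product_univ]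
  exact U.sum_mul_eq_card_inf_smul_sum_image V fun y => MonoidAlgebra.single y (ε y : K)
end

section
/- Let K be a commutative ring with (−1 : K) ≠ (1 : K), G a group, ε : G →* Kˣ a sign character with values regarded in K, and M a module over the group algebra K[G]. Fix m ∈ M, and let A and B be finite subgroups of G. Write AB = {ab : a ∈ A, b ∈ B} for the (finite) product set. Suppose there is a bijection f : AB → AB satisfying: for each w ∈ AB there exists ρ_w ∈ G with ρ_w² = e, ε(ρ_w) = −1, f(w) = w·ρ_w, ρ_w • m = m, and f(f(w)) = w. Then (∑_{σ ∈ A} ε(σ)·σ) • ((∑_{τ ∈ B} ε(τ)·τ) • m) = 0 in M. -/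
/-!
Expanding the product gives `∑_{(σ, τ) ∈ A × B} ε(στ) στ • m`. Every `w ∈ AB` arises from exactly
`|A ∩ B|` pairs, so this is `|A ∩ B| • ∑_{w ∈ AB} ε(w) w • m`. The involution `f` pairs `w` with
`w ρ_w`, whose term is `ε(w) ε(ρ_w) w • (ρ_w • m) = -(ε(w) w • m)`; it has no fixed points because
`ρ_w = 1` would force `-1 = ε(1) = 1`. Hence the sum over `AB` cancels in pairs.
-/

open Pointwise

namespace MonoidAlgebra

variable {K G : Type*} [CommRing K] [Group G]

noncomputable def signedOf (ε : G →* Kˣ) : G →* MonoidAlgebra K G where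
  toFun g := single g (ε g : K)
  map_one' := by rw [map_one, Units.val_one, one_def]
  map_mul' g h := by rw [single_mul_single, map_mul, Units.val_mul]

theorem signedOf_apply (ε : G →* Kˣ) (g : G) : signedOf ε g = single g (ε g : K) := rfl

theorem sum_signedOf_mul_sum_signedOf {ι κ : Type*} [Fintype ι] [Fintype κ] (ε : G →* Kˣ)
    (x : ι → G) (y : κ → G) :
    (∑ i, signedOf ε (x i)) * (∑ j, signedOf ε (y j)) =
      ∑ p : ι × κ, signedOf ε (x p.1 * y p.2) := by
  simp only [Finset.sum_mul_sum, Fintype.sum_prod_type, map_mul]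

variable {M : Type*} [AddCommGroup M] [Module (MonoidAlgebra K G) M]

theorem signedOf_mul_smul_of_smul_eq {ε : G →* Kˣ} {m : M} {ρ : G} (hε : (ε ρ : K) = -1)
    (hm : of K G ρ • m = m) (w : G) :
    signedOf ε (w * ρ) • m = -(signedOf ε w • m) := by
  have : signedOf ε ρ = -of K G ρ := by rw [signedOf_apply, hε, single_neg, of_apply]
  rw [map_mul, mul_smul, this, neg_smul, hm, smul_neg]

theorem sum_signedOf_smul_eq_zero {ε : G →* Kˣ} {m : M} (hK : (-1 : K) ≠ 1)
    {X : Type*} [Fintype X] (w : X → G) (f : X → X) (hf : Function.Involutive f)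
    (hρ : ∀ x, ∃ ρ : G, (ε ρ : K) = -1 ∧ w (f x) = w x * ρ ∧ of K G ρ • m = m) :
    ∑ x, signedOf ε (w x) • m = 0 := by
  refine Finset.sum_ninvolution f (fun x => ?_) (fun x _ hx => ?_) (fun _ => Finset.mem_univ _) hf
  · obtain ⟨ρ, hε, hw, hm⟩ := hρ x
    rw [hw, signedOf_mul_smul_of_smul_eq hε hm, add_neg_cancel]
  · obtain ⟨ρ, hε, hw, -⟩ := hρ x
    have hρ1 : ρ = 1 := mul_eq_left.mp (hx ▸ hw).symm
    exact hK (by rw [← hε, hρ1, map_one, Units.val_one])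

end MonoidAlgebra

namespace Subgroup

variable {G : Type*} [Group G]

theorem card_mul_fiber_eq_card_inf {A B : Subgroup G} {w : G} (hw : w ∈ (A : Set G) * B) :
    Nat.card {p : A × B // (p.1 : G) * p.2 = w} = Nat.card ↥(A ⊓ B) := by
  obtain ⟨a, ha, b, hb, rfl⟩ := hw
  have mem_right (p : {p : A × B // (p.1 : G) * p.2 = a * b}) : a⁻¹ * p.1.1 ∈ B := by
    have : a⁻¹ * (p.1.1 : G) = b * (p.1.2 : G)⁻¹ := by
      rw [inv_mul_eq_iff_eq_mul, ← mul_assoc, eq_mul_inv_iff_mul_eq, p.2]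
    exact this ▸ mul_mem hb (inv_mem p.1.2.2)
  refine (Nat.card_congr (α := ↥(A ⊓ B)) (β := {p : A × B // (p.1 : G) * p.2 = a * b})
    { toFun := fun c => ⟨(⟨a * c, mul_mem ha (mem_inf.mp c.2).1⟩,
        ⟨c⁻¹ * b, mul_mem (inv_mem (mem_inf.mp c.2).2) hb⟩), by simp [mul_assoc]⟩
      invFun := fun p => ⟨a⁻¹ * p.1.1, mem_inf.mpr ⟨mul_mem (inv_mem ha) p.1.1.2, mem_right p⟩⟩
      left_inv := fun c => by ext; simp
      right_inv := fun p => by ext <;> simp [← p.2, mul_assoc] }).symm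

theorem sum_mul_eq_card_inf_smul_sum {M : Type*} [AddCommMonoid M] (A B : Subgroup G)
    [Fintype A] [Fintype B] [Fintype ↥((A : Set G) * B)] (t : G → M) :
    ∑ p : A × B, t (p.1 * p.2) = Nat.card ↥(A ⊓ B) • ∑ w : ↥((A : Set G) * B), t w := by
  classical
  let mul : A × B → ↥((A : Set G) * B) := fun p => ⟨p.1 * p.2, Set.mul_mem_mul p.1.2 p.2.2⟩
  have card_fiber (w : ↥((A : Set G) * B)) :
      Fintype.card {p // mul p = w} = Nat.card ↥(A ⊓ B) := by
    rw [← Nat.card_eq_fintype_card, ← card_mul_fiber_eq_card_inf w.2]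
    exact Nat.card_congr (Equiv.subtypeEquivRight fun _ => Subtype.ext_iff)
  rw [← Fintype.sum_fiberwise' mul (fun w => t w), Finset.smul_sum]
  simp only [Finset.sum_const, Finset.card_univ, card_fiber]

end Subgroup

theorem garnir_lemma_3_1_general (K : Type*) [CommRing K] (G : Type*) [Group G]
    (M : Type*) [AddCommGroup M] [Module (MonoidAlgebra K G) M]
    (ε : G →* Kˣ) (m : M) (A B : Subgroup G) [Fintype A] [Fintype B]
    (f : ↥((A : Set G) * (B : Set G)) → ↥((A : Set G) * (B : Set G)))
    (h : ∀ w : ↥((A : Set G) * (B : Set G)), ∃ ρ : G,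
      ρ * ρ = 1 ∧ ((ε ρ : K) = -1) ∧ ((f w : G) = (w : G) * ρ) ∧
        (MonoidAlgebra.of K G ρ) • m = m ∧ f (f w) = w)
    (hK : (-1 : K) ≠ 1) :
    (∑ σ : A, MonoidAlgebra.single (σ : G) ((ε (σ : G) : Kˣ) : K)) •
        ((∑ τ : B, MonoidAlgebra.single (τ : G) ((ε (τ : G) : Kˣ) : K)) • m) = 0 := by
  have : Fintype ↥((A : Set G) * B) := ((Set.toFinite _).mul (Set.toFinite _)).fintype
  have hf : Function.Involutive f := fun w => let ⟨_, _, _, _, _, hff⟩ := h w; hff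
  have hρ (w : ↥((A : Set G) * B)) :
      ∃ ρ : G, (ε ρ : K) = -1 ∧ (f w : G) = w * ρ ∧ MonoidAlgebra.of K G ρ • m = m :=
    let ⟨ρ, _, hε, hfw, hm, _⟩ := h w; ⟨ρ, hε, hfw, hm⟩
  change (∑ σ : A, MonoidAlgebra.signedOf ε σ) • (∑ τ : B, MonoidAlgebra.signedOf ε τ) • m = 0
  rw [smul_smul, MonoidAlgebra.sum_signedOf_mul_sum_signedOf, Finset.sum_smul,
    Subgroup.sum_mul_eq_card_inf_smul_sum A B fun w => MonoidAlgebra.signedOf ε w • m,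
    MonoidAlgebra.sum_signedOf_smul_eq_zero hK Subtype.val f hf hρ, smul_zero]

/-- Abstract form of Lemma 3.1 of the paper: if the product set `AB` of two finite subgroups
`A`, `B` of `G` carries a bijection `f` with `f(w) = w·ρ_w`, `ρ_w² = e`, `ε(ρ_w) = -1`,
`ρ_w • m = m` and `f(f(w)) = w`, then the signed sum over `A` annihilates the signed sum
over `B` applied to `m`:
`(∑_{σ ∈ A} ε(σ)·σ) • ((∑_{τ ∈ B} ε(τ)·τ) • m) = 0`. -/
theorem garnir_lemma_3_1 (K : Type*) [CommRing K] (G : Type*) [Group G]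
    (M : Type*) [AddCommGroup M] [Module K M] [Module (MonoidAlgebra K G) M]
    [IsScalarTower K (MonoidAlgebra K G) M]
    (ε : G →* Kˣ) (m : M) (A B : Subgroup G) [Fintype A] [Fintype B]
    (f : ↥((A : Set G) * (B : Set G)) → ↥((A : Set G) * (B : Set G)))
    (hf : Function.Bijective f)
    (h : ∀ w : ↥((A : Set G) * (B : Set G)), ∃ ρ : G,
      ρ * ρ = 1 ∧ ((ε ρ : K) = -1) ∧ ((f w : G) = (w : G) * ρ) ∧
        (MonoidAlgebra.of K G ρ) • m = m ∧ f (f w) = w)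
    (hK : (-1 : K) ≠ 1) :
    (∑ σ : A, MonoidAlgebra.single (σ : G) ((ε (σ : G) : Kˣ) : K)) •
        ((∑ τ : B, MonoidAlgebra.single (τ : G) ((ε (τ : G) : Kˣ) : K)) • m) = 0 :=
  garnir_lemma_3_1_general K G M ε m A B f h hK
end

section
/- Let K be a commutative ring with (−1 : K) ≠ (1 : K), G a group, ε : G →* Kˣ a sign character with values in {±1} ⊆ K, and M a module over the group algebra K[G]. Fix m ∈ M, let A and B be finite subgroups of G with product set AB = {ab : a ∈ A, b ∈ B}, and set e_m = ∑_{τ ∈ B} ε(τ) (τ • m). Suppose there is a bijection f : AB → AB such that for each w ∈ AB there exists ρ_w ∈ G with ρ_w² = e, ε(ρ_w) = −1, f(w) = w·ρ_w, ρ_w • m = m, and f(f(w)) = w. Let H = A ∩ B, assume that |H|, the order of H, is invertible in K (i.e. (|H| : K) is a unit), and let C ⊆ A be a complete set of representatives of the left cosets of H in A with e ∈ C. Then e_m = − ∑_{σ ∈ C, σ ≠ e} ε(σ) (σ • e_m). -/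
open Pointwise

/-- Abstract form of Theorem 3.2 of the paper: under the hypotheses of Lemma 3.1, with
`H = A ∩ B` of order invertible in `K` and `C` a complete set of representatives of the
left cosets of `H` in `A` containing the identity, the generalized Δ-polytabloid
`e_m = ∑_{τ ∈ B} ε(τ) (τ • m)` satisfies
`e_m = - ∑_{σ ∈ C, σ ≠ e} ε(σ) (σ • e_m)`. -/
theorem garnir_theorem_3_2 (K : Type*) [CommRing K] (hK : (-1 : K) ≠ 1)
    (G : Type*) [Group G] [DecidableEq G]
    (M : Type*) [AddCommGroup M] [Module K M] [Module (MonoidAlgebra K G) M]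
    [IsScalarTower K (MonoidAlgebra K G) M]
    (ε : G →* Kˣ) (hpm : ∀ g : G, (ε g : K) = 1 ∨ (ε g : K) = -1)
    (m : M) (A B : Subgroup G) [Fintype A] [Fintype B]
    (em : M) (hem : em = ∑ τ : B, (ε (τ : G) : K) • ((MonoidAlgebra.of K G (τ : G)) • m))
    (f : ↥((A : Set G) * (B : Set G)) → ↥((A : Set G) * (B : Set G)))
    (hf : Function.Bijective f)
    (h : ∀ w : ↥((A : Set G) * (B : Set G)), ∃ ρ : G,
      ρ * ρ = 1 ∧ ((ε ρ : K) = -1) ∧ ((f w : G) = (w : G) * ρ) ∧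
        (MonoidAlgebra.of K G ρ) • m = m ∧ f (f w) = w)
    (hH : IsUnit ((Nat.card ↥(A ⊓ B) : K)))
    (C : Finset G) (hCA : ↑C ⊆ (A : Set G)) (h1C : (1 : G) ∈ C)
    (hC : ∀ a ∈ A, ∃! σ, σ ∈ C ∧ σ⁻¹ * a ∈ A ⊓ B) :
    em = - ∑ σ ∈ C.erase 1, (ε σ : K) • ((MonoidAlgebra.of K G σ) • em) := by
  classical
  have hfinH : Finite ↥(A ⊓ B) :=
    Finite.of_injective (Subgroup.inclusion (inf_le_left (b := B)))
      (Subgroup.inclusion_injective _)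
  haveI : Fintype ↥(A ⊓ B) := Fintype.ofFinite _
  have hΩfin : ((A : Set G) * (B : Set G)).Finite := (Set.toFinite _).mul (Set.toFinite _)
  haveI : Fintype ↥((A : Set G) * (B : Set G)) := hΩfin.fintype
  set Φ : G → MonoidAlgebra K G := fun g => MonoidAlgebra.of K G g with hΦ
  have key : ∀ (k : K) (x : MonoidAlgebra K G) (v : M), x • (k • v) = k • (x • v) := by
    intro k x v
    rw [← smul_one_smul (MonoidAlgebra K G) k v, ← mul_smul, mul_smul_comm, mul_one, smul_assoc]
  set T : G → M := fun g => (ε g : K) • (Φ g • m) with hT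
  -- expansion of ε g • g • em
  have hFT : ∀ g : G, (ε g : K) • (Φ g • em) = ∑ τ : B, T (g * ↑τ) := by
    intro g
    rw [hem, Finset.smul_sum, Finset.smul_sum]
    refine Finset.sum_congr rfl fun τ _ => ?_
    rw [key, smul_smul, hT]
    simp only [map_mul, Units.val_mul, hΦ, mul_smul]
  -- invariance under right multiplication by H on the left factor
  have hinv : ∀ (c h' : G), h' ∈ A ⊓ B →
      (ε (c * h') : K) • (Φ (c * h') • em) = (ε c : K) • (Φ c • em) := by
    intro c h' hh'
    rw [hFT, hFT]
    refine Fintype.sum_bijective (fun τ : B => (⟨h', hh'.2⟩ * τ : B))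
      (Group.mulLeft_bijective _) _ _ fun τ => ?_
    simp [mul_assoc]
  -- the sum over the product set vanishes (involution)
  have hS : ∑ w : ↥((A : Set G) * (B : Set G)), T ↑w = 0 := by
    refine Finset.sum_involution (fun w _ => f w) ?_ ?_ (fun w _ => Finset.mem_univ _) ?_
    · intro w _
      obtain ⟨ρ, hρ2, hρε, hfw, hρm, hff⟩ := h w
      show T ↑w + T ↑(f w) = 0
      have hTfw : T ↑(f w) = -(T ↑w) := by
        rw [hfw]
        show (ε ((w : G) * ρ) : K) • (Φ ((w : G) * ρ) • m) = -((ε (w : G) : K) • (Φ (w : G) • m))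
        have hmm : Φ ((w : G) * ρ) • m = Φ (w : G) • m := by
          simp only [hΦ, map_mul, mul_smul, hρm]
        rw [map_mul, Units.val_mul, hρε, mul_neg_one, hmm, neg_smul]
      rw [hTfw, add_neg_cancel]
    · intro w _ _ heq
      obtain ⟨ρ, hρ2, hρε, hfw, hρm, hff⟩ := h w
      have hfww : ((f w : G)) = (w : G) := congrArg Subtype.val heq
      have : (w : G) * ρ = (w : G) * 1 := by
        rw [mul_one, ← hfw, hfww]
      have hρ1 : ρ = 1 := mul_left_cancel this
      rw [hρ1, map_one, Units.val_one] at hρε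
      exact hK hρε.symm
    · intro w _
      obtain ⟨ρ, hρ2, hρε, hfw, hρm, hff⟩ := h w
      exact hff
  -- fibers of the multiplication map have cardinality |H|
  have hfib : ∀ w : ↥((A : Set G) * (B : Set G)),
      (Finset.univ.filter fun p : A × B =>
        (↑p.1 * ↑p.2 : G) = (w : G)).card = Nat.card ↥(A ⊓ B) := by
    intro w
    obtain ⟨σ₀, hσ₀, τ₀, hτ₀, hw⟩ := Set.mem_mul.1 w.2
    rw [Nat.card_eq_fintype_card, ← Finset.card_univ]
    refine (Finset.card_bij
      (fun (x : ↥(A ⊓ B)) _ =>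
        ((⟨σ₀ * ↑x, mul_mem hσ₀ x.2.1⟩ : A), (⟨(↑x)⁻¹ * τ₀, mul_mem (inv_mem x.2.2) hτ₀⟩ : B)))
      ?_ ?_ ?_).symm
    · intro x _
      simp only [Finset.mem_filter, Finset.mem_univ, true_and]
      rw [← hw]; group
    · intro x₁ _ x₂ _ hx
      have := congrArg (fun p => ((p.1 : G), (p.2 : G))) hx
      simp only [Prod.mk.injEq] at this
      exact Subtype.ext (mul_left_cancel this.1)
    · intro p hp
      simp only [Finset.mem_filter, Finset.mem_univ, true_and] at hp
      have h1 : σ₀⁻¹ * ↑p.1 ∈ A := mul_mem (inv_mem hσ₀) p.1.2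
      have hprod : (↑p.1 : G) * ↑p.2 = σ₀ * τ₀ := by rw [hp, ← hw]
      have hp1 : (↑p.1 : G) = σ₀ * τ₀ * (↑p.2 : G)⁻¹ := by
        rw [eq_mul_inv_iff_mul_eq]; exact hprod
      have heq : σ₀⁻¹ * (↑p.1 : G) = τ₀ * (↑p.2 : G)⁻¹ := by
        rw [hp1]; group
      have h2 : σ₀⁻¹ * ↑p.1 ∈ B := by
        rw [heq]; exact mul_mem hτ₀ (inv_mem p.2.2)
      refine ⟨⟨σ₀⁻¹ * ↑p.1, h1, h2⟩, Finset.mem_univ _, ?_⟩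
      have e1 : σ₀ * (σ₀⁻¹ * (↑p.1 : G)) = ↑p.1 := by group
      have e2 : (σ₀⁻¹ * (↑p.1 : G))⁻¹ * τ₀ = ↑p.2 := by
        rw [hp1]; group
      exact Prod.ext (Subtype.ext e1) (Subtype.ext e2)
  -- Lemma 3.1: the signed sum over A kills em
  have hA0 : ∑ σ : A, (ε (σ : G) : K) • (Φ (σ : G) • em) = 0 := by
    have step1 : ∑ σ : A, (ε (σ : G) : K) • (Φ (σ : G) • em)
        = ∑ p : A × B, T (↑p.1 * ↑p.2) := by
      rw [Fintype.sum_prod_type]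
      exact Finset.sum_congr rfl fun σ _ => hFT _
    have step2 : ∑ p : A × B, T (↑p.1 * ↑p.2)
        = (Nat.card ↥(A ⊓ B)) • ∑ w : ↥((A : Set G) * (B : Set G)), T ↑w := by
      rw [← Finset.sum_fiberwise_of_maps_to
        (g := fun p : A × B => (⟨↑p.1 * ↑p.2,
          Set.mul_mem_mul p.1.2 p.2.2⟩ : ↥((A : Set G) * (B : Set G))))
        (t := Finset.univ) (fun _ _ => Finset.mem_univ _), Finset.smul_sum]
      refine Finset.sum_congr rfl fun w _ => ?_
      have hfe : (Finset.univ.filter fun p : A × B =>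
            (⟨(↑p.1 * ↑p.2 : G), Set.mul_mem_mul p.1.2 p.2.2⟩ :
              ↥((A : Set G) * (B : Set G))) = w)
          = Finset.univ.filter fun p : A × B => (↑p.1 * ↑p.2 : G) = (w : G) := by
        ext p
        simp [Subtype.ext_iff]
      calc ∑ p ∈ Finset.univ.filter (fun p : A × B =>
              (⟨(↑p.1 * ↑p.2 : G), Set.mul_mem_mul p.1.2 p.2.2⟩ :
                ↥((A : Set G) * (B : Set G))) = w), T (↑p.1 * ↑p.2)
          = ∑ _p ∈ Finset.univ.filter
              (fun p : A × B => (↑p.1 * ↑p.2 : G) = (w : G)), T ↑w := by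
            refine Finset.sum_congr hfe fun p hp => ?_
            rw [(Finset.mem_filter.1 hp).2]
        _ = (Nat.card ↥(A ⊓ B)) • T ↑w := by rw [Finset.sum_const, hfib w]
    rw [step1, step2, hS, smul_zero]
  -- grouping into cosets of H
  have HFdef := (Set.toFinite ((A ⊓ B : Subgroup G) : Set G))
  set HF : Finset G := HFdef.toFinset with hHF
  have hHFmem : ∀ g : G, g ∈ HF ↔ g ∈ A ⊓ B := by
    intro g; rw [hHF, Set.Finite.mem_toFinset]; rfl
  have hHFcard : HF.card = Nat.card ↥(A ⊓ B) := by
    have h1 : Nat.card ↥(A ⊓ B) = ((A ⊓ B : Subgroup G) : Set G).ncard :=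
      Nat.card_coe_set_eq _
    rw [h1, Set.ncard_eq_toFinset_card _ HFdef, hHF]
  have hcoset : ∑ σ : A, (ε (σ : G) : K) • (Φ (σ : G) • em)
      = ∑ c ∈ C, (Nat.card ↥(A ⊓ B)) • ((ε c : K) • (Φ c • em)) := by
    have : ∑ p ∈ C ×ˢ HF, (ε p.1 : K) • (Φ p.1 • em)
        = ∑ σ : A, (ε (σ : G) : K) • (Φ (σ : G) • em) := by
      refine Finset.sum_bij
        (fun p hp => (⟨p.1 * p.2, mul_mem (hCA (Finset.mem_product.1 hp).1)
          ((hHFmem p.2).1 (Finset.mem_product.1 hp).2).1⟩ : A))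
        (fun _ _ => Finset.mem_univ _) ?_ ?_ ?_
      · intro p₁ hp₁ p₂ hp₂ hx
        obtain ⟨hc₁, hh₁⟩ := Finset.mem_product.1 hp₁
        obtain ⟨hc₂, hh₂⟩ := Finset.mem_product.1 hp₂
        have hx' : p₁.1 * p₁.2 = p₂.1 * p₂.2 := congrArg Subtype.val hx
        have haA : p₁.1 * p₁.2 ∈ A := mul_mem (hCA hc₁) ((hHFmem p₁.2).1 hh₁).1
        obtain ⟨σ, _, huniq⟩ := hC _ haA
        have e₁ : p₁.1 = σ := huniq p₁.1 ⟨hc₁, by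
          rw [inv_mul_cancel_left]; exact (hHFmem p₁.2).1 hh₁⟩
        have e₂ : p₂.1 = σ := huniq p₂.1 ⟨hc₂, by
          rw [hx', inv_mul_cancel_left]; exact (hHFmem p₂.2).1 hh₂⟩
        have ec : p₁.1 = p₂.1 := e₁.trans e₂.symm
        have eh : p₁.2 = p₂.2 := by
          rw [ec] at hx'; exact mul_left_cancel hx'
        exact Prod.ext ec eh
      · intro σ _
        obtain ⟨c, ⟨hcC, hcH⟩, _⟩ := hC ↑σ σ.2
        refine ⟨(c, c⁻¹ * ↑σ), Finset.mem_product.2 ⟨hcC, (hHFmem _).2 hcH⟩, ?_⟩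
        ext
        simp [mul_inv_cancel_left]
      · intro p hp
        obtain ⟨hc, hh⟩ := Finset.mem_product.1 hp
        exact ((hinv p.1 p.2 ((hHFmem p.2).1 hh)).symm : _)
    rw [← this, Finset.sum_product]
    refine Finset.sum_congr rfl fun c _ => ?_
    show (∑ _h' ∈ HF, (ε c : K) • (Φ c • em))
      = (Nat.card ↥(A ⊓ B)) • ((ε c : K) • (Φ c • em))
    rw [Finset.sum_const, hHFcard]
  -- assemble
  have hF1 : (ε (1 : G) : K) • (Φ (1 : G) • em) = em := by
    rw [hΦ]
    simp only [map_one, Units.val_one, one_smul]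
  set R : M := ∑ σ ∈ C.erase 1, (ε σ : K) • (Φ σ • em) with hR
  have hsplit : ∑ c ∈ C, (ε c : K) • (Φ c • em) = em + R := by
    rw [← Finset.add_sum_erase _ _ h1C, ← hR, hF1]
  have hzero : (Nat.card ↥(A ⊓ B) : K) • (em + R) = 0 := by
    rw [Nat.cast_smul_eq_nsmul, ← hsplit, Finset.smul_sum, ← hcoset, hA0]
  obtain ⟨u, hu⟩ := hH
  rw [← hu] at hzero
  have : em + R = 0 := by
    calc em + R = ((↑u⁻¹ : K) * (↑u : K)) • (em + R) := by
          rw [Units.inv_mul, one_smul]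
      _ = (↑u⁻¹ : K) • ((↑u : K) • (em + R)) := by rw [mul_smul]
      _ = 0 := by rw [hzero, smul_zero]
  exact eq_neg_of_add_eq_zero_left this
end
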